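/- Energy lower bound on makespan: let J be a finite nonempty job set with processing times p_j ≥ 0, resource rates c_j ≥ 0, and capacity C > 0, let t ∈ ℝ, and let s : J → ℝ be a cumulative schedule with s_j ≥ t for all j ∈ J. Then the makespan satisfies max_{j∈J} (s_j + p_j) ≥ t + (1/C) Σ_{j∈J} p_j c_j. -/

import Mathlib

/-!
Integrate the resource load `u ↦ ∑ j, c j · 𝟙[s j, s j + p j)(u)` over `[t, M)`, where `M` is the
makespan. Every job runs inside that window, so the integral is the total energy `∑ j, p j c j`;
the schedule keeps the load below `C` pointwise, so the integral is at most `(M - t) C`.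
-/

/-- `s` is a cumulative schedule of the job set `J` with processing times `p`,
resource consumption rates `c`, and resource capacity `C`: at every time `t`,
the total rate of resource consumption of the jobs running at `t` is at most `C`. -/
def CumulativeSchedule {ι : Type*} (J : Finset ι) (p c : ι → ℝ) (C : ℝ) (s : ι → ℝ) : Prop :=
  ∀ t : ℝ, ∑ j ∈ J.filter (fun j => s j ≤ t ∧ t < s j + p j), c j ≤ C

open MeasureTheory Set

namespace CumulativeSchedule

variable {ι : Type*} (J : Finset ι) (p c : ι → ℝ) (s : ι → ℝ)

noncomputable def load (u : ℝ) : ℝ :=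
  ∑ j ∈ J, (Ico (s j) (s j + p j)).indicator (fun _ => c j) u

variable {J p c s}

theorem load_eq_sum_filter (u : ℝ) :
    load J p c s u = ∑ j ∈ J.filter (fun j => s j ≤ u ∧ u < s j + p j), c j := by
  rw [load, Finset.sum_filter]
  refine Finset.sum_congr rfl fun j _ => ?_
  simp only [indicator, mem_Ico]

theorem load_le {C : ℝ} (h : CumulativeSchedule J p c C s) (u : ℝ) : load J p c s u ≤ C := by
  rw [load_eq_sum_filter]
  exact h u

theorem integrableOn_indicator_Ico (j : ι) (a b : ℝ) :
    IntegrableOn ((Ico (s j) (s j + p j)).indicator (fun _ => c j)) (Ico a b) :=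
  ((integrable_indicator_iff measurableSet_Ico).2
    (integrableOn_const measure_Ico_lt_top.ne)).integrableOn

theorem integral_load_eq {a b : ℝ} (hp : ∀ j ∈ J, 0 ≤ p j) (ha : ∀ j ∈ J, a ≤ s j)
    (hb : ∀ j ∈ J, s j + p j ≤ b) :
    ∫ u in Ico a b, load J p c s u = ∑ j ∈ J, p j * c j := by
  unfold load
  rw [integral_finsetSum _ fun j _ => integrableOn_indicator_Ico j a b]
  refine Finset.sum_congr rfl fun j hj => ?_
  rw [setIntegral_indicator measurableSet_Ico,
    inter_eq_self_of_subset_right (Ico_subset_Ico (ha j hj) (hb j hj)), setIntegral_const,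
    Real.volume_real_Ico_of_le (le_add_of_nonneg_right (hp j hj)), smul_eq_mul, add_sub_cancel_left]

theorem sum_mul_le {C a b : ℝ} (h : CumulativeSchedule J p c C s) (hp : ∀ j ∈ J, 0 ≤ p j)
    (ha : ∀ j ∈ J, a ≤ s j) (hb : ∀ j ∈ J, s j + p j ≤ b) (hab : a ≤ b) :
    ∑ j ∈ J, p j * c j ≤ (b - a) * C :=
  calc ∑ j ∈ J, p j * c j = ∫ u in Ico a b, load J p c s u := (integral_load_eq hp ha hb).symm
    _ ≤ ∫ _ in Ico a b, C :=
      setIntegral_mono_on (integrable_finsetSum _ fun j _ => integrableOn_indicator_Ico j a b)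
        (integrableOn_const measure_Ico_lt_top.ne) measurableSet_Ico fun u _ => h.load_le u
    _ = (b - a) * C := by rw [setIntegral_const, Real.volume_real_Ico_of_le hab, smul_eq_mul]

end CumulativeSchedule

theorem stmt_13_general {ι : Type*} (J : Finset ι) (hJ : J.Nonempty) (p c : ι → ℝ) (C : ℝ)
    (hC : 0 < C)
    (hp : ∀ j ∈ J, 0 ≤ p j)
    (t : ℝ) (s : ι → ℝ)
    (hcum : CumulativeSchedule J p c C s)
    (hs : ∀ j ∈ J, t ≤ s j) :
    t + (1 / C) * ∑ j ∈ J, p j * c j ≤ J.sup' hJ (fun j => s j + p j) := by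
  set M := J.sup' hJ (fun j => s j + p j)
  have hM : ∀ j ∈ J, s j + p j ≤ M := fun j hj => J.le_sup' (fun j => s j + p j) hj
  obtain ⟨j₀, hj₀⟩ := hJ
  have htM : t ≤ M := by linarith [hs j₀ hj₀, hp j₀ hj₀, hM j₀ hj₀]
  have energy := hcum.sum_mul_le hp hs hM htM
  rw [one_div_mul_eq_div]
  linarith [(div_le_iff₀ hC).2 energy]

/-- Energy lower bound on makespan: if all jobs of a nonempty `J` start at time
`≥ t` in a cumulative schedule, then the makespan is at least
`t + (1/C) ∑_{j∈J} p j * c j`. -/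
theorem stmt_13 {ι : Type*} (J : Finset ι) (hJ : J.Nonempty) (p c : ι → ℝ) (C : ℝ)
    (hC : 0 < C)
    (hp : ∀ j ∈ J, 0 ≤ p j)
    (hc : ∀ j ∈ J, 0 ≤ c j)
    (t : ℝ) (s : ι → ℝ)
    (hcum : CumulativeSchedule J p c C s)
    (hs : ∀ j ∈ J, t ≤ s j) :
    t + (1 / C) * ∑ j ∈ J, p j * c j ≤ J.sup' hJ (fun j => s j + p j) :=
  stmt_13_general J hJ p c C hC hp t s hcum hs
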